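/- (Theorem 3(a).) Under the hypotheses of Theorem 1 (closed-loop unicycle dynamics with controller ω = v/d + v·k₁·Ω(v·ē_x) + v·k₂·((r − d)/r)·η(r − d), v ≠ 0 constant, k₁, k₂ > 0, r(0) ∈ (r_i, r_o)), the transformed error vector satisfies ē_x(t)² + ē_y(t)² ≤ 2·V₁(0) for all t ≥ 0, where V₁(0) = (1/2)(ē_x(0)² + ē_y(0)²) + d·k₂·V_r(r(0) − d). -/

import Mathlib

/-- Range r(t) = √((x(t) − x_T)² + (y(t) − y_T)²). -/
noncomputable def rng (x y : ℝ → ℝ) (xT yT : ℝ) (t : ℝ) : ℝ :=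
  Real.sqrt ((x t - xT) ^ 2 + (y t - yT) ^ 2)

/-- Transformed error ē_x(t) = (x(t) − x_T)·cos θ(t) + (y(t) − y_T)·sin θ(t). -/
noncomputable def ebx (x y θ : ℝ → ℝ) (xT yT : ℝ) (t : ℝ) : ℝ :=
  (x t - xT) * Real.cos (θ t) + (y t - yT) * Real.sin (θ t)

/-- Transformed error ē_y(t) = −(x(t) − x_T)·sin θ(t) + (y(t) − y_T)·cos θ(t) + d. -/
noncomputable def eby (x y θ : ℝ → ℝ) (xT yT d : ℝ) (t : ℝ) : ℝ :=
  -(x t - xT) * Real.sin (θ t) + (y t - yT) * Real.cos (θ t) + d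

/-- The asymmetric barrier Lyapunov function V_r. -/
noncomputable def Vr (δa δb e : ℝ) : ℝ :=
  if 0 < e then (1 / 2) * Real.log (δb ^ 2 / (δb ^ 2 - e ^ 2))
  else (1 / 2) * Real.log (δa ^ 2 / (δa ^ 2 - e ^ 2))

/-- η(e) = 1/(δ_b² − e²) for e > 0 and η(e) = 1/(δ_a² − e²) for e ≤ 0. -/
noncomputable def eta (δa δb e : ℝ) : ℝ :=
  if 0 < e then 1 / (δb ^ 2 - e ^ 2) else 1 / (δa ^ 2 - e ^ 2)

/-! A barrier-Lyapunov argument. While `r ∈ (r_i, r_o)`, the controller makes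
`V₁ = ½ (ē_x² + ē_y²) + d k₂ V_r (r - d)` decrease: `V̇₁ = -d k₁ (v ē_x) Ω (v ē_x) ≤ 0`.
Since `V_r` blows up at `-δ_a` and `δ_b`, the sublevel set `{V₁ ≤ V₁(0)}` confines `r` to a compact
subinterval of `(r_i, r_o)`, so by continuity `r` never reaches `r_i` or `r_o`. Hence
`V₁(t) ≤ V₁(0)` for all `t ≥ 0`, and `ē_x² + ē_y² ≤ 2 V₁ ≤ 2 V₁(0)` because `V_r ≥ 0`. -/

open Set Real

section LogBarrier

variable {δ e C : ℝ}

lemma half_log_barrier_nonneg (he : e ^ 2 < δ ^ 2) :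
    0 ≤ (1 / 2) * log (δ ^ 2 / (δ ^ 2 - e ^ 2)) := by
  have hpos : 0 < δ ^ 2 - e ^ 2 := by linarith
  have : 1 ≤ δ ^ 2 / (δ ^ 2 - e ^ 2) := by
    rw [le_div_iff₀ hpos]; nlinarith [sq_nonneg e]
  have := log_nonneg this
  positivity

lemma hasDerivAt_half_log_barrier (he : e ^ 2 < δ ^ 2) :
    HasDerivAt (fun u => (1 / 2) * log (δ ^ 2 / (δ ^ 2 - u ^ 2)))
      (e * (1 / (δ ^ 2 - e ^ 2))) e := by
  have hpos : 0 < δ ^ 2 - e ^ 2 := by linarith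
  have hδ : δ ≠ 0 := by rintro rfl; nlinarith [sq_nonneg e]
  have hden : HasDerivAt (fun u : ℝ => δ ^ 2 - u ^ 2) (-(2 * e)) e := by
    simpa using (hasDerivAt_pow 2 e).const_sub (δ ^ 2)
  have hquot := ((hasDerivAt_const e (δ ^ 2)).div hden hpos.ne').log
    (div_pos (by positivity) hpos).ne'
  refine (hquot.const_mul (1 / 2)).congr_deriv ?_
  simp only [Pi.div_apply]
  field_simp
  ring

lemma sq_le_of_half_log_barrier_le (he : e ^ 2 < δ ^ 2)
    (hC : (1 / 2) * log (δ ^ 2 / (δ ^ 2 - e ^ 2)) ≤ C) :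
    e ^ 2 ≤ δ ^ 2 * (1 - exp (-(2 * C))) := by
  have hpos : 0 < δ ^ 2 - e ^ 2 := by linarith
  have hratio : δ ^ 2 / (δ ^ 2 - e ^ 2) ≤ exp (2 * C) :=
    (log_le_iff_le_exp (div_pos (by nlinarith [sq_nonneg e]) hpos)).1 (by linarith)
  rw [div_le_iff₀ hpos] at hratio
  have hexp : exp (2 * C) * exp (-(2 * C)) = 1 := by rw [← exp_add]; simp
  nlinarith [exp_pos (-(2 * C))]

end LogBarrier

lemma half_log_barrier_zero (δ : ℝ) : (1 / 2) * log (δ ^ 2 / (δ ^ 2 - 0 ^ 2)) = 0 := by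
  rcases eq_or_ne δ 0 with rfl | hδ
  · simp
  · simp [hδ]

section Barrier

variable {δa δb e : ℝ}

lemma Vr_of_nonpos (h : e ≤ 0) : Vr δa δb e = (1 / 2) * log (δa ^ 2 / (δa ^ 2 - e ^ 2)) :=
  if_neg h.not_gt

lemma Vr_of_pos (h : 0 < e) : Vr δa δb e = (1 / 2) * log (δb ^ 2 / (δb ^ 2 - e ^ 2)) :=
  if_pos h

lemma Vr_nonneg (h1 : -δa < e) (h2 : e < δb) : 0 ≤ Vr δa δb e := by
  rcases le_or_gt e 0 with h | h
  · rw [Vr_of_nonpos h]; exact half_log_barrier_nonneg (by nlinarith)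
  · rw [Vr_of_pos h]; exact half_log_barrier_nonneg (by nlinarith)

lemma hasDerivWithinAt_Vr_Iic (h1 : -δa < e) (h0 : e ≤ 0) :
    HasDerivWithinAt (Vr δa δb) (e * eta δa δb e) (Iic 0) e := by
  rw [eta, if_neg h0.not_gt]
  exact (hasDerivAt_half_log_barrier (by nlinarith)).hasDerivWithinAt.congr
    (fun u hu => Vr_of_nonpos hu) (Vr_of_nonpos h0)

lemma hasDerivWithinAt_Vr_Ici (h2 : e < δb) (h0 : 0 ≤ e) :
    HasDerivWithinAt (Vr δa δb) (e * eta δa δb e) (Ici 0) e := by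
  have hbranch : ∀ u, 0 ≤ u → Vr δa δb u = (1 / 2) * log (δb ^ 2 / (δb ^ 2 - u ^ 2)) := by
    intro u hu
    rcases hu.eq_or_lt with rfl | hu
    · rw [Vr_of_nonpos le_rfl, half_log_barrier_zero, half_log_barrier_zero]
    · exact Vr_of_pos hu
  have hslope : e * eta δa δb e = e * (1 / (δb ^ 2 - e ^ 2)) := by
    rcases h0.eq_or_lt with rfl | he
    · simp
    · rw [eta, if_pos he]
  rw [hslope]
  exact (hasDerivAt_half_log_barrier (by nlinarith)).hasDerivWithinAt.congr
    (fun u hu => hbranch u hu) (hbranch e h0)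

lemma hasDerivAt_Vr (h1 : -δa < e) (h2 : e < δb) : HasDerivAt (Vr δa δb) (e * eta δa δb e) e := by
  rcases lt_trichotomy e 0 with hneg | rfl | hpos
  · exact (hasDerivWithinAt_Vr_Iic h1 hneg.le).hasDerivAt (Iic_mem_nhds hneg)
  · rw [← hasDerivWithinAt_univ, ← Iic_union_Ici (a := (0 : ℝ))]
    exact (hasDerivWithinAt_Vr_Iic h1 le_rfl).union (hasDerivWithinAt_Vr_Ici h2 le_rfl)
  · exact (hasDerivWithinAt_Vr_Ici h2 hpos.le).hasDerivAt (Ici_mem_nhds hpos)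

lemma exists_Icc_of_Vr_le (ha : 0 < δa) (hb : 0 < δb) (C : ℝ) :
    ∃ a b, -δa < a ∧ b < δb ∧ ∀ e ∈ Ioo (-δa) δb, Vr δa δb e ≤ C → e ∈ Icc a b := by
  set K := 1 - exp (-(2 * C))
  have hK : K < 1 := sub_lt_self 1 (exp_pos _)
  refine ⟨-√(δa ^ 2 * K), √(δb ^ 2 * K),
    neg_lt_neg ((sqrt_lt' ha).2 (mul_lt_of_lt_one_right (by positivity) hK)),
    (sqrt_lt' hb).2 (mul_lt_of_lt_one_right (by positivity) hK), fun e he hC => ?_⟩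
  rcases le_or_gt e 0 with h | h
  · rw [Vr_of_nonpos h] at hC
    have hsq := sq_le_of_half_log_barrier_le (by nlinarith [he.1]) hC
    exact ⟨(abs_le.1 (abs_le_sqrt hsq)).1, h.trans (sqrt_nonneg _)⟩
  · rw [Vr_of_pos h] at hC
    have hsq := sq_le_of_half_log_barrier_le (by nlinarith [he.2]) hC
    exact ⟨(neg_nonpos.2 (sqrt_nonneg _)).trans h.le, (abs_le.1 (abs_le_sqrt hsq)).2⟩

end Barrier

section Kinematics

variable {x y θ : ℝ → ℝ} {xT yT d v ω t : ℝ}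

lemma hasDerivAt_ebx (hx : HasDerivAt x (v * cos (θ t)) t) (hy : HasDerivAt y (v * sin (θ t)) t)
    (hθ : HasDerivAt θ ω t) :
    HasDerivAt (ebx x y θ xT yT) (v + (eby x y θ xT yT d t - d) * ω) t := by
  refine (((hx.sub_const xT).mul hθ.cos).add ((hy.sub_const yT).mul hθ.sin)).congr_deriv ?_
  simp only [eby]
  linear_combination v * sin_sq_add_cos_sq (θ t)

lemma hasDerivAt_eby (hx : HasDerivAt x (v * cos (θ t)) t) (hy : HasDerivAt y (v * sin (θ t)) t)
    (hθ : HasDerivAt θ ω t) :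
    HasDerivAt (eby x y θ xT yT d) (-ebx x y θ xT yT t * ω) t := by
  refine ((((hx.sub_const xT).neg.mul hθ.sin).add ((hy.sub_const yT).mul hθ.cos)).add_const d
    ).congr_deriv ?_
  simp only [ebx, Pi.neg_apply]
  ring

lemma continuousAt_rng (hx : ContinuousAt x t) (hy : ContinuousAt y t) :
    ContinuousAt (rng x y xT yT) t :=
  (((hx.sub continuousAt_const).pow 2).add ((hy.sub continuousAt_const).pow 2)).sqrt

lemma hasDerivAt_rng (hx : HasDerivAt x (v * cos (θ t)) t) (hy : HasDerivAt y (v * sin (θ t)) t)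
    (hr : rng x y xT yT t ≠ 0) :
    HasDerivAt (rng x y xT yT) (v * ebx x y θ xT yT t / rng x y xT yT t) t := by
  have hsq : (x t - xT) ^ 2 + (y t - yT) ^ 2 ≠ 0 := fun h => hr (by simp [rng, h])
  refine ((((hx.sub_const xT).pow 2).add ((hy.sub_const yT).pow 2)).sqrt hsq).congr_deriv ?_
  have hrt : √((x t - xT) ^ 2 + (y t - yT) ^ 2) = rng x y xT yT t := rfl
  simp only [Pi.add_apply, Pi.pow_apply, hrt, ebx]
  field_simp
  ring

/-- In the frame of the vehicle the error vector `(ē_x, ē_y - d)` rotates at rate `-ω`, so its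
energy only changes through the forward motion and the offset `d`. -/
lemma hasDerivAt_error_energy (hx : HasDerivAt x (v * cos (θ t)) t)
    (hy : HasDerivAt y (v * sin (θ t)) t) (hθ : HasDerivAt θ ω t) :
    HasDerivAt (fun s => (1 / 2) * (ebx x y θ xT yT s ^ 2 + eby x y θ xT yT d s ^ 2))
      (ebx x y θ xT yT t * (v - d * ω)) t := by
  refine ((((hasDerivAt_ebx (d := d) hx hy hθ).pow 2).add
    ((hasDerivAt_eby hx hy hθ).pow 2)).const_mul (1 / 2)).congr_deriv ?_
  push_cast
  ring

end Kinematics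

noncomputable def lyapunovV1 (x y θ : ℝ → ℝ) (xT yT d k2 ri ro t : ℝ) : ℝ :=
  (1 / 2) * (ebx x y θ xT yT t ^ 2 + eby x y θ xT yT d t ^ 2) +
    d * k2 * Vr (d - ri) (ro - d) (rng x y xT yT t - d)

section Lyapunov

variable {x y θ Ω : ℝ → ℝ} {xT yT v d k1 k2 ri ro t : ℝ}

lemma hasDerivAt_lyapunovV1 (hri : 0 ≤ ri) (hd : d ≠ 0) (hr : rng x y xT yT t ∈ Ioo ri ro)
    (hx : HasDerivAt x (v * cos (θ t)) t) (hy : HasDerivAt y (v * sin (θ t)) t)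
    (hθ : HasDerivAt θ (v / d + v * k1 * Ω (v * ebx x y θ xT yT t) +
      v * k2 * ((rng x y xT yT t - d) / rng x y xT yT t) *
        eta (d - ri) (ro - d) (rng x y xT yT t - d)) t) :
    HasDerivAt (lyapunovV1 x y θ xT yT d k2 ri ro)
      (-(d * k1) * (v * ebx x y θ xT yT t * Ω (v * ebx x y θ xT yT t))) t := by
  have hr0 : rng x y xT yT t ≠ 0 := (hri.trans_lt hr.1).ne'
  have hbarrier := (hasDerivAt_Vr (δa := d - ri) (δb := ro - d) (by linarith [hr.1])
    (by linarith [hr.2])).comp t ((hasDerivAt_rng hx hy hr0).sub_const d)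
  refine ((hasDerivAt_error_energy hx hy hθ).add (hbarrier.const_mul (d * k2))).congr_deriv ?_
  field_simp
  ring

lemma sq_ebx_add_sq_eby_le_two_mul_lyapunovV1 (hd : 0 ≤ d) (hk2 : 0 ≤ k2)
    (hr : rng x y xT yT t ∈ Ioo ri ro) :
    ebx x y θ xT yT t ^ 2 + eby x y θ xT yT d t ^ 2 ≤ 2 * lyapunovV1 x y θ xT yT d k2 ri ro t := by
  have hVr := Vr_nonneg (δa := d - ri) (δb := ro - d) (e := rng x y xT yT t - d)
    (by linarith [hr.1]) (by linarith [hr.2])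
  unfold lyapunovV1
  nlinarith [mul_nonneg (mul_nonneg hd hk2) hVr]

lemma Vr_le_of_lyapunovV1_le (hd : 0 < d) (hk2 : 0 < k2) {C : ℝ}
    (h : lyapunovV1 x y θ xT yT d k2 ri ro t ≤ C) :
    Vr (d - ri) (ro - d) (rng x y xT yT t - d) ≤ C / (d * k2) := by
  rw [le_div_iff₀ (by positivity)]
  unfold lyapunovV1 at h
  nlinarith [sq_nonneg (ebx x y θ xT yT t), sq_nonneg (eby x y θ xT yT d t)]

end Lyapunov

lemma antitoneOn_of_hasDerivAt_nonpos {V V' : ℝ → ℝ} {D : Set ℝ} (hD : Convex ℝ D)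
    (h : ∀ t ∈ D, HasDerivAt V (V' t) t ∧ V' t ≤ 0) : AntitoneOn V D :=
  antitoneOn_of_hasDerivWithinAt_nonpos hD
    (fun t ht => (h t ht).1.continuousAt.continuousWithinAt)
    (fun t ht => (h t (interior_subset ht)).1.hasDerivWithinAt)
    (fun t ht => (h t (interior_subset ht)).2)

theorem forall_mem_and_le_of_hasDerivAt_nonpos {α : Type*} [TopologicalSpace α] {r : ℝ → α}
    {V V' : ℝ → ℝ} {U K : Set α} (hU : IsOpen U) (hK : IsClosed K) (hKU : K ⊆ U)
    (hr : ContinuousOn r (Ici 0)) (hV : ∀ t ≥ 0, r t ∈ U → HasDerivAt V (V' t) t ∧ V' t ≤ 0)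
    (hsub : ∀ t ≥ 0, r t ∈ U → V t ≤ V 0 → r t ∈ K) (h0 : r 0 ∈ U) :
    ∀ t ≥ 0, r t ∈ U ∧ V t ≤ V 0 := by
  have hdecr : ∀ T, (∀ s ∈ Icc 0 T, r s ∈ U) → ∀ s ∈ Icc 0 T, V s ≤ V 0 := fun T hT s hs =>
    antitoneOn_of_hasDerivAt_nonpos (convex_Icc 0 T) (fun u hu => hV u hu.1 (hT u hu))
      (left_mem_Icc.2 (hs.1.trans hs.2)) hs hs.1
  suffices hstay : ∀ t ≥ 0, r t ∈ U from
    fun t ht => ⟨hstay t ht, hdecr t (fun s hs => hstay s hs.1) t ⟨ht, le_rfl⟩⟩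
  by_contra! hexit
  obtain ⟨t₀, ht₀, hexit⟩ := hexit
  -- `τ` is the first exit time from `U`
  set B := Ici 0 ∩ r ⁻¹' Uᶜ
  have hB : IsClosed B := hr.preimage_isClosed_of_isClosed isClosed_Ici hU.isClosed_compl
  have hτ : sInf B ∈ B := hB.csInf_mem (⟨t₀, ht₀, hexit⟩ : B.Nonempty) ⟨0, fun s hs => hs.1⟩
  set τ := sInf B
  have hbefore : ∀ s ∈ Ico 0 τ, r s ∈ U := fun s hs => by
    by_contra hs'
    exact (csInf_le (s := B) ⟨0, fun u hu => hu.1⟩ ⟨hs.1, hs'⟩).not_gt hs.2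
  have hτpos : 0 < τ := hτ.1.lt_of_ne fun h => hτ.2 (h ▸ h0)
  have hK_before : MapsTo r (Ico 0 τ) K := fun s hs =>
    hsub s hs.1 (hbefore s hs) (hdecr s (fun u hu => hbefore u ⟨hu.1, hu.2.trans_lt hs.2⟩) s
      ⟨hs.1, le_rfl⟩)
  have hKτ : r τ ∈ K := by
    simpa [hK.closure_eq] using ((hr τ hτ.1).mono Ico_subset_Ici_self).mem_closure
      (by rw [closure_Ico hτpos.ne]; exact right_mem_Icc.2 hτpos.le) hK_before
  exact hτ.2 (hKU hKτ)

theorem theorem3a_error_bound_general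
    (x y θ : ℝ → ℝ) (Ω : ℝ → ℝ) (v d k1 k2 ri ro xT yT : ℝ)
    (hΩpos : ∀ s : ℝ, s ≠ 0 → 0 < s * Ω s)
    (hri : 0 < ri) (hrid : ri < d) (hdro : d < ro)
    (hk1 : 0 < k1) (hk2 : 0 < k2)
    (hxdiff : ∀ t ≥ (0 : ℝ), DifferentiableAt ℝ x t)
    (hydiff : ∀ t ≥ (0 : ℝ), DifferentiableAt ℝ y t)
    (hclosedloop : ∀ t ≥ (0 : ℝ), rng x y xT yT t ∈ Set.Ioo ri ro →
      HasDerivAt x (v * Real.cos (θ t)) t ∧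
      HasDerivAt y (v * Real.sin (θ t)) t ∧
      HasDerivAt θ (v / d + v * k1 * Ω (v * ebx x y θ xT yT t) +
        v * k2 * ((rng x y xT yT t - d) / rng x y xT yT t) *
          eta (d - ri) (ro - d) (rng x y xT yT t - d)) t)
    (hr0 : rng x y xT yT 0 ∈ Set.Ioo ri ro)
    (V10 : ℝ)
    (hV10 : V10 = (1 / 2) * ((ebx x y θ xT yT 0) ^ 2 + (eby x y θ xT yT d 0) ^ 2) +
      d * k2 * Vr (d - ri) (ro - d) (rng x y xT yT 0 - d)) :
    ∀ t ≥ (0 : ℝ), (ebx x y θ xT yT t) ^ 2 + (eby x y θ xT yT d t) ^ 2 ≤ 2 * V10 := by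
  have hd : 0 < d := hri.trans hrid
  have hV10' : V10 = lyapunovV1 x y θ xT yT d k2 ri ro 0 := hV10
  have hcont : ContinuousOn (rng x y xT yT) (Ici 0) := fun t ht =>
    (continuousAt_rng (hxdiff t ht).continuousAt (hydiff t ht).continuousAt).continuousWithinAt
  have hdecr : ∀ t ≥ (0 : ℝ), rng x y xT yT t ∈ Ioo ri ro →
      HasDerivAt (lyapunovV1 x y θ xT yT d k2 ri ro)
        (-(d * k1) * (v * ebx x y θ xT yT t * Ω (v * ebx x y θ xT yT t))) t ∧
      -(d * k1) * (v * ebx x y θ xT yT t * Ω (v * ebx x y θ xT yT t)) ≤ 0 := by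
    intro t ht hr
    obtain ⟨hx, hy, hθ⟩ := hclosedloop t ht hr
    refine ⟨hasDerivAt_lyapunovV1 hri.le hd.ne' hr hx hy hθ, ?_⟩
    rcases eq_or_ne (v * ebx x y θ xT yT t) 0 with h | h
    · simp [h]
    · nlinarith [hΩpos _ h, mul_pos hd hk1]
  obtain ⟨a, b, ha, hb, hab⟩ :=
    exists_Icc_of_Vr_le (sub_pos.2 hrid) (sub_pos.2 hdro) (V10 / (d * k2))
  have htrap : ∀ t ≥ (0 : ℝ), rng x y xT yT t ∈ Ioo ri ro →
      lyapunovV1 x y θ xT yT d k2 ri ro t ≤ lyapunovV1 x y θ xT yT d k2 ri ro 0 →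
      rng x y xT yT t ∈ Icc (d + a) (d + b) := by
    intro t _ hr hV
    have hab' := hab _ ⟨by linarith [hr.1], by linarith [hr.2]⟩
      (Vr_le_of_lyapunovV1_le hd hk2 (hV10' ▸ hV))
    exact ⟨by linarith [hab'.1], by linarith [hab'.2]⟩
  intro t ht
  obtain ⟨hr, hV⟩ := forall_mem_and_le_of_hasDerivAt_nonpos isOpen_Ioo isClosed_Icc
    (Icc_subset_Ioo (by linarith) (by linarith)) hcont hdecr htrap hr0 t ht
  linarith [sq_ebx_add_sq_eby_le_two_mul_lyapunovV1 (θ := θ) hd.le hk2.le hr]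

/-- Theorem 3(a): Under the hypotheses of Theorem 1, the transformed
error vector satisfies ē_x(t)² + ē_y(t)² ≤ 2·V₁(0) for all t ≥ 0, where
V₁(0) = (1/2)(ē_x(0)² + ē_y(0)²) + d·k₂·V_r(r(0) − d). -/
theorem theorem3a_error_bound
    (x y θ : ℝ → ℝ) (Ω : ℝ → ℝ) (v d k1 k2 ri ro xT yT : ℝ)
    (hΩcont : Continuous Ω) (hΩ0 : Ω 0 = 0) (hΩpos : ∀ s : ℝ, s ≠ 0 → 0 < s * Ω s)
    (hv : v ≠ 0) (hri : 0 < ri) (hrid : ri < d) (hdro : d < ro)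
    (hk1 : 0 < k1) (hk2 : 0 < k2)
    (hxdiff : ∀ t ≥ (0 : ℝ), DifferentiableAt ℝ x t)
    (hydiff : ∀ t ≥ (0 : ℝ), DifferentiableAt ℝ y t)
    (hθdiff : ∀ t ≥ (0 : ℝ), DifferentiableAt ℝ θ t)
    (hclosedloop : ∀ t ≥ (0 : ℝ), rng x y xT yT t ∈ Set.Ioo ri ro →
      HasDerivAt x (v * Real.cos (θ t)) t ∧
      HasDerivAt y (v * Real.sin (θ t)) t ∧
      HasDerivAt θ (v / d + v * k1 * Ω (v * ebx x y θ xT yT t) +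
        v * k2 * ((rng x y xT yT t - d) / rng x y xT yT t) *
          eta (d - ri) (ro - d) (rng x y xT yT t - d)) t)
    (hr0 : rng x y xT yT 0 ∈ Set.Ioo ri ro)
    (V10 : ℝ)
    (hV10 : V10 = (1 / 2) * ((ebx x y θ xT yT 0) ^ 2 + (eby x y θ xT yT d 0) ^ 2) +
      d * k2 * Vr (d - ri) (ro - d) (rng x y xT yT 0 - d)) :
    ∀ t ≥ (0 : ℝ), (ebx x y θ xT yT t) ^ 2 + (eby x y θ xT yT d t) ^ 2 ≤ 2 * V10 :=
  theorem3a_error_bound_general x y θ Ω v d k1 k2 ri ro xT yT hΩpos hri hrid hdro hk1 hk2 hxdiff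
    hydiff hclosedloop hr0 V10 hV10
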